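/- Let G be a countable directed graph, F a potential on G, β ∈ ℝ, and m an e^{βF}-conformal measure concentrated on P(G)_rec. Let v ∈ NW_G and let μ be a finite path with s(μ) = v. Then, up to an m-null set, Z(μ) is the disjoint union of the cylinders Z(μδ) over finite paths δ of positive length with s(δ) = r(μ) and r(δ) = v; that is, m(Z(μ) \ ⋃_δ Z(μδ)) = 0, the union being over all finite paths δ of positive length from r(μ) to v. -/

import Mathlib

open MeasureTheory
open scoped ENNReal

/-- A countable directed graph: countable sets of vertices and arrows together with
source and range maps. -/
structure CDG where
  V : Type
  A : Type
  countV : Countable V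
  countA : Countable A
  src : A → V
  rng : A → V

attribute [instance] CDG.countV CDG.countA

namespace CDG

/-- The space `P(G)` of infinite paths in `G`. -/
abbrev PathSpace (G : CDG) : Type :=
  {p : ℕ → G.A // ∀ i : ℕ, G.rng (p i) = G.src (p (i + 1))}

/-- The source vertex of an infinite path. -/
def isrc {G : CDG} (p : G.PathSpace) : G.V := G.src (p.1 0)

/-- The shift map `σ` on `P(G)`. -/
def shift {G : CDG} (p : G.PathSpace) : G.PathSpace :=
  ⟨fun i => p.1 (i + 1), fun i => p.2 (i + 1)⟩

/-- A countable set carries the discrete (Borel) σ-algebra. -/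
instance (G : CDG) : MeasurableSpace G.A := ⊤

/-- A finite path in `G`: a base vertex together with a (possibly empty) string of
composable arrows starting at the base vertex.  A finite path with no arrows is a vertex. -/
structure FinPath (G : CDG) where
  base : G.V
  arrows : List G.A
  head_src : ∀ a ∈ arrows.head?, G.src a = base
  chain : arrows.Chain' fun a b => G.rng a = G.src b

namespace FinPath

variable {G : CDG}

/-- The length `|μ|` of a finite path. -/
def length (μ : FinPath G) : ℕ := μ.arrows.length

/-- The source `s(μ)` of a finite path. -/
def fsrc (μ : FinPath G) : G.V := μ.base

/-- The range `r(μ)` of a finite path. -/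
def frng (μ : FinPath G) : G.V := μ.arrows.getLast?.elim μ.base G.rng

/-- A vertex, regarded as a finite path of length `0`. -/
def ofVertex (G : CDG) (v : G.V) : FinPath G :=
  ⟨v, [], by intro a ha; simp at ha, by simp [List.Chain']⟩

/-- Concatenation `μδ` of composable finite paths. -/
def concat (μ δ : FinPath G) (h : δ.base = μ.frng) : FinPath G where
  base := μ.base
  arrows := μ.arrows ++ δ.arrows
  head_src := by
    intro a ha
    cases hμ : μ.arrows with
    | nil =>
        rw [hμ] at ha
        simp only [List.nil_append] at ha
        have h1 : G.src a = δ.base := δ.head_src a ha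
        have h2 : μ.frng = μ.base := by simp [FinPath.frng, hμ]
        rw [h1, h, h2]
    | cons b l =>
        rw [hμ] at ha
        simp only [List.cons_append, List.head?_cons, Option.mem_def,
          Option.some.injEq] at ha
        cases ha
        exact μ.head_src _ (by rw [hμ]; rfl)
  chain := by
    refine List.IsChain.append μ.chain δ.chain ?_
    intro x hx y hy
    rw [Option.mem_def] at hx
    have h1 : μ.frng = G.rng x := by simp [FinPath.frng, hx]
    have h2 : G.src y = δ.base := δ.head_src y hy
    rw [h2, h, h1]

end FinPath

/-- The extension of a potential `F : G_Ar → ℝ` to finite paths: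
`F(μ) = Σ_{i} F(a_i)`, with `F(v) = 0` for vertices. -/
def pot {G : CDG} (F : G.A → ℝ) (μ : FinPath G) : ℝ := (μ.arrows.map F).sum

/-- The cylinder set `Z(μ)` of a finite path `μ`. -/
def cyl {G : CDG} (μ : FinPath G) : Set G.PathSpace :=
  {p | G.src (p.1 0) = μ.base ∧
    ∀ (i : ℕ) (h : i < μ.arrows.length), p.1 i = μ.arrows.get ⟨i, h⟩}

/-- The cylinder set `Z(v)` of a vertex `v`. -/
def cylV (G : CDG) (v : G.V) : Set G.PathSpace := {p | G.src (p.1 0) = v}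

/-- An `e^{βF}`-conformal measure on `P(G)`: a non-zero Borel measure giving finite
measure to each `Z(v)` and satisfying `m(σ(B ∩ Z(a))) = e^{βF(a)} m(B ∩ Z(a))`. -/
structure IsConformal (G : CDG) (F : G.A → ℝ) (β : ℝ)
    (m : Measure G.PathSpace) : Prop where
  ne_zero : m ≠ 0
  vert_fin : ∀ v : G.V, m (cylV G v) < ⊤
  conformal : ∀ (a : G.A) (B : Set G.PathSpace), MeasurableSet B →
      m (shift '' (B ∩ {p : G.PathSpace | p.1 0 = a})) =
        ENNReal.ofReal (Real.exp (β * F a)) * m (B ∩ {p : G.PathSpace | p.1 0 = a})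

/-- The set `NW_G` of non-wandering vertices: those supporting a loop. -/
def NW (G : CDG) : Set G.V :=
  {v | ∃ μ : FinPath G, 0 < μ.length ∧ μ.fsrc = v ∧ μ.frng = v}

/-- The set `V_∞` of sinks and infinite emitters. -/
def Vinf (G : CDG) : Set G.V :=
  {v | (∀ a : G.A, G.src a ≠ v) ∨ {a : G.A | G.src a = v}.Infinite}

/-- A hereditary subset of vertices. -/
def Hereditary (G : CDG) (H : Set G.V) : Prop :=
  ∀ a : G.A, G.src a ∈ H → G.rng a ∈ H

/-- A saturated subset of vertices. -/
def Saturated (G : CDG) (H : Set G.V) : Prop :=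
  ∀ v : G.V, v ∉ Vinf G → (∀ a : G.A, G.src a = v → G.rng a ∈ H) → v ∈ H

/-- `G` is cofinal when the only non-empty hereditary and saturated subset of
vertices is the set of all vertices. -/
def Cofinal (G : CDG) : Prop :=
  ∀ H : Set G.V, H.Nonempty → Hereditary G H → Saturated G H → H = Set.univ

/-- `P(G)_rec`: the paths passing through every arrow of `NW_Ar` infinitely often. -/
def recSet (G : CDG) : Set G.PathSpace :=
  {p | ∀ a : G.A, G.src a ∈ NW G → ∀ n : ℕ, ∃ i ≥ n, p.1 i = a}

/-- `P(G)_wan`: the paths visiting every vertex at most finitely many times. -/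
def wanSet (G : CDG) : Set G.PathSpace :=
  {p | ∀ v : G.V, {i : ℕ | G.src (p.1 i) = v}.Finite}

/-- The matrix entry `A(β)^n_{v,w} = Σ_μ e^{-βF(μ)} ∈ [0,∞]`, summing over finite
paths `μ` of length `n` with `s(μ) = v` and `r(μ) = w`. -/
noncomputable def Apow (G : CDG) (F : G.A → ℝ) (β : ℝ) (n : ℕ) (v w : G.V) : ℝ≥0∞ :=
  ∑' μ : {μ : FinPath G // μ.length = n ∧ μ.fsrc = v ∧ μ.frng = w},
    ENNReal.ofReal (Real.exp (-(β * pot F μ.1)))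

/-- An `A(β)`-harmonic vector: non-zero, finite, non-negative, and harmonic at
every vertex. -/
def IsHarmonicVec (G : CDG) (F : G.A → ℝ) (β : ℝ) (ψ : G.V → ℝ≥0∞) : Prop :=
  ψ ≠ 0 ∧ (∀ v : G.V, ψ v ≠ ⊤) ∧
    ∀ v : G.V, ψ v =
      ∑' a : {a : G.A // G.src a = v},
        ENNReal.ofReal (Real.exp (-(β * F a.1))) * ψ (G.rng a.1)

end CDG

/-!
A loop at `v` provides an arrow `a` with `s(a) = v`, so `a ∈ NW_Ar`, and a recurrent
`p ∈ Z(μ)` passes through `a` at some time `i > |μ|`. The arrows `p_{|μ|} ⋯ p_{i-1}` then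
form a path `δ` of positive length from `r(μ)` to `s(a) = v` with `p ∈ Z(μδ)`. Hence
`Z(μ) \ ⋃_δ Z(μδ)` lies in the null set `P(G) \ P(G)_rec`.
-/

namespace CDG

variable {G : CDG}

theorem FinPath.exists_src_eq_fsrc {μ : FinPath G} (hμ : 0 < μ.length) :
    ∃ a : G.A, G.src a = μ.fsrc := by
  obtain ⟨a, ha⟩ :=
    Option.isSome_iff_exists.mp (List.isSome_head?.mpr (List.ne_nil_of_length_pos hμ))
  exact ⟨a, μ.head_src a ha⟩

theorem exists_src_eq_of_mem_NW {v : G.V} (hv : v ∈ NW G) : ∃ a : G.A, G.src a = v := by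
  obtain ⟨ℓ, hℓ, hsrc, -⟩ := hv
  exact hsrc ▸ FinPath.exists_src_eq_fsrc hℓ

def segment (p : G.PathSpace) (n k : ℕ) : FinPath G where
  base := G.src (p.1 n)
  arrows := List.ofFn fun j : Fin k => p.1 (n + j)
  head_src := by
    intro a ha
    cases k with
    | zero => simp at ha
    | succ k => simp_all
  chain := by
    rw [List.Chain', List.isChain_iff_getElem]
    intro j hj
    simpa [Nat.add_assoc] using p.2 (n + j)

@[simp]
theorem length_segment (p : G.PathSpace) (n k : ℕ) : (segment p n k).length = k := by
  simp [segment, FinPath.length]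

theorem frng_segment (p : G.PathSpace) (n k : ℕ) :
    (segment p n k).frng = G.src (p.1 (n + k)) := by
  cases k with
  | zero => rfl
  | succ k =>
    show (List.ofFn fun j : Fin (k + 1) => p.1 (n + j)).getLast?.elim _ G.rng = _
    rw [List.getLast?_eq_some_getLast (by simp), List.getLast_ofFn]
    simpa [Nat.add_assoc] using p.2 (n + k)

theorem src_length_of_mem_cyl {μ : FinPath G} {p : G.PathSpace} (hp : p ∈ cyl μ) :
    G.src (p.1 μ.length) = μ.frng := by
  obtain ⟨hbase, harrows⟩ := hp
  unfold FinPath.frng FinPath.length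
  rw [List.getLast?_eq_getElem?]
  rcases hlen : μ.arrows.length with _ | k
  · rw [List.getElem?_eq_none (by omega)]
    exact hbase
  · rw [List.getElem?_eq_getElem (by omega)]
    simp only [Option.elim_some, Nat.add_sub_cancel]
    rw [← p.2 k, harrows k (by omega)]
    rfl

theorem mem_cyl_concat_segment {μ : FinPath G} {p : G.PathSpace} (hp : p ∈ cyl μ) (k : ℕ)
    (h : (segment p μ.length k).base = μ.frng) :
    p ∈ cyl (μ.concat (segment p μ.length k) h) := by
  refine ⟨hp.1, fun i hi => ?_⟩
  simp only [FinPath.concat, List.get_eq_getElem]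
  by_cases hiμ : i < μ.length
  · rw [List.getElem_append_left hiμ]
    exact hp.2 i hiμ
  · rw [List.getElem_append_right (Nat.le_of_not_lt hiμ)]
    simp only [segment, List.getElem_ofFn]
    exact congrArg p.1 (Nat.add_sub_cancel' (Nat.le_of_not_lt hiμ)).symm

theorem mem_iUnion_cyl_concat_of_mem_recSet {v : G.V} (hv : v ∈ NW G) {μ : FinPath G}
    {p : G.PathSpace} (hpμ : p ∈ cyl μ) (hp : p ∈ recSet G) :
    p ∈ ⋃ δ : {δ : FinPath G // 0 < δ.length ∧ δ.fsrc = μ.frng ∧ δ.frng = v},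
      cyl (μ.concat δ.1 δ.2.2.1) := by
  obtain ⟨a, ha⟩ := exists_src_eq_of_mem_NW hv
  obtain ⟨i, hi, hpi⟩ := hp a (ha ▸ hv) (μ.length + 1)
  set δ := segment p μ.length (i - μ.length)
  have hδ : 0 < δ.length ∧ δ.fsrc = μ.frng ∧ δ.frng = v := by
    refine ⟨by simp only [δ, length_segment]; omega, src_length_of_mem_cyl hpμ, ?_⟩
    rw [frng_segment, Nat.add_sub_cancel' (by omega), hpi, ha]
  exact Set.mem_iUnion.mpr ⟨⟨δ, hδ⟩, mem_cyl_concat_segment hpμ _ _⟩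

end CDG

open CDG in
theorem stmt14_general (G : CDG) (m : MeasureTheory.Measure G.PathSpace)
    (hrec : m (recSet G)ᶜ = 0)
    (v : G.V) (hv : v ∈ NW G) (μ : FinPath G) :
    m (cyl μ \
      ⋃ δ : {δ : FinPath G // 0 < δ.length ∧ δ.fsrc = μ.frng ∧ δ.frng = v},
        cyl (μ.concat δ.1 δ.2.2.1)) = 0 :=
  measure_mono_null
    (fun _ hp hprec => hp.2 (mem_iUnion_cyl_concat_of_mem_recSet hv hp.1 hprec)) hrec

open CDG in
/-- if `m` is `e^{βF}`-conformal and concentrated on `P(G)_rec`,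
`v ∈ NW_G` and `μ` is a finite path with `s(μ) = v`, then up to an `m`-null set `Z(μ)`
is the union of the cylinders `Z(μδ)` over finite paths `δ` of positive length from
`r(μ)` to `v`. -/
theorem stmt14 (G : CDG) (F : G.A → ℝ) (β : ℝ) (m : MeasureTheory.Measure G.PathSpace)
    (hm : IsConformal G F β m) (hrec : m (recSet G)ᶜ = 0)
    (v : G.V) (hv : v ∈ NW G) (μ : FinPath G) (hμ : μ.fsrc = v) :
    m (cyl μ \
      ⋃ δ : {δ : FinPath G // 0 < δ.length ∧ δ.fsrc = μ.frng ∧ δ.frng = v},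
        cyl (μ.concat δ.1 δ.2.2.1)) = 0 :=
  stmt14_general G m hrec v hv μ
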